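/- Fix k ≥ 2, n ≥ 1, and let B be the permutation automaton on {1,…,k} × Z_{n+1} defined above (a, b acting on the first coordinate as (1 2 … k) and (1 2), c cycling the second coordinate, initial state (k,0), final states (k,i) for i ≠ n). For each word w over {a,b,c}, let ρ_w ∈ S_k be the permutation induced by w on the first coordinate. Then { ρ_w | w ∈ L(B) } = Stab_{S_k}(k). -/

import Mathlib

/-!
Reading a word through `B` moves the first coordinate by the letter permutations and adds the
number of `c`'s to the second, so acceptance forces `ρ_w` to fix `k`. Conversely `(1 2 … k)` and
`(1 2)` generate `S_k`, and since `S_k` is finite they generate it already as a monoid; hence every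
permutation is `ρ_w` for a word `w` over `{a, b}`, which leaves the second coordinate at `0 ≠ n`.
-/

/-- Letters `a, b, c` are `0, 1, 2`, and the point `i` of `{1, …, k}` is `i - 1 : Fin k`. -/
def qPerm (k : ℕ) (hk : 2 ≤ k) : Fin 3 → Equiv.Perm (Fin k) :=
  fun x =>
    if x = 0 then finRotate k
    else if x = 1 then Equiv.swap (⟨0, by omega⟩ : Fin k) ⟨1, by omega⟩
    else 1

def bDelta (k n : ℕ) (hk : 2 ≤ k) :
    Fin k × ZMod (n + 1) → Fin 3 → Fin k × ZMod (n + 1) :=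
  fun p x =>
    if x = 0 then (finRotate k p.1, p.2)
    else if x = 1 then (Equiv.swap (⟨0, by omega⟩ : Fin k) ⟨1, by omega⟩ p.1, p.2)
    else (p.1, p.2 + 1)

def finB (k n : ℕ) : Set (Fin k × ZMod (n + 1)) :=
  {p | p.1.val = k - 1 ∧ p.2 ≠ (n : ZMod (n + 1))}

open Equiv Equiv.Perm

theorem foldl_bDelta (k n : ℕ) (hk : 2 ≤ k) (w : List (Fin 3)) (q : Fin k) (z : ZMod (n + 1)) :
    w.foldl (bDelta k n hk) (q, z) =
      (w.foldl (fun p x => qPerm k hk x p) q, z + (w.count 2 : ℕ)) := by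
  induction w generalizing q z with
  | nil => simp
  | cons x w ih =>
    fin_cases x <;> simp [bDelta, qPerm, ih, add_assoc, add_comm]

theorem submonoidClosure_finRotate_swap_zero_one (k : ℕ) (hk : 2 ≤ k) :
    Submonoid.closure ({finRotate k, swap (⟨0, by omega⟩ : Fin k) ⟨1, by omega⟩} :
      Set (Perm (Fin k))) = ⊤ := by
  obtain ⟨m, rfl⟩ : ∃ m, k = m + 2 := ⟨k - 2, by omega⟩
  have hrot : finRotate (m + 2) ⟨0, by omega⟩ = ⟨1, by omega⟩ := finRotate_of_lt (by omega)
  rw [← Subgroup.closure_toSubmonoid_of_finite, ← hrot,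
    closure_cycle_adjacent_swap isCycle_finRotate support_finRotate, Subgroup.top_toSubmonoid]

theorem exists_word_of_mem_submonoidClosure (k : ℕ) (hk : 2 ≤ k) {σ : Perm (Fin k)}
    (hσ : σ ∈ Submonoid.closure
      ({finRotate k, swap (⟨0, by omega⟩ : Fin k) ⟨1, by omega⟩} : Set (Perm (Fin k)))) :
    ∃ w : List (Fin 3), 2 ∉ w ∧ ∀ q, w.foldl (fun p x => qPerm k hk x p) q = σ q := by
  induction hσ using Submonoid.closure_induction with
  | mem τ hτ =>
    rcases hτ with rfl | rfl
    · exact ⟨[0], by decide, fun q => by simp [qPerm]⟩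
    · exact ⟨[1], by decide, fun q => by simp [qPerm]⟩
  | one => exact ⟨[], by simp, fun q => rfl⟩
  | mul σ τ _ _ hσ hτ =>
    obtain ⟨u, hu2, hu⟩ := hσ
    obtain ⟨v, hv2, hv⟩ := hτ
    refine ⟨v ++ u, by simp [hu2, hv2], fun q => ?_⟩
    rw [List.foldl_append, hv, hu, Perm.mul_apply]

/-- The permutations of the first coordinate induced by words accepted by B
are exactly the stabilizer of the point k in S_k. -/
theorem stmt_14 (k n : ℕ) (hk : 2 ≤ k) (hn : 1 ≤ n)
    (ρ : List (Fin 3) → Equiv.Perm (Fin k))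
    (hρ : ∀ (w : List (Fin 3)) (q : Fin k),
      ρ w q = w.foldl (fun p x => qPerm k hk x p) q) :
    {σ : Equiv.Perm (Fin k) | ∃ w : List (Fin 3),
        w.foldl (bDelta k n hk) (⟨k - 1, by omega⟩, 0) ∈ finB k n ∧ ρ w = σ} =
      {σ : Equiv.Perm (Fin k) | σ ⟨k - 1, by omega⟩ = ⟨k - 1, by omega⟩} := by
  ext σ
  constructor
  · rintro ⟨w, hacc, rfl⟩
    rw [foldl_bDelta] at hacc
    exact Fin.ext (by rw [hρ]; exact hacc.1)
  · intro hσ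
    obtain ⟨w, hw2, hw⟩ := exists_word_of_mem_submonoidClosure k hk
      (submonoidClosure_finRotate_swap_zero_one k hk ▸ Submonoid.mem_top σ)
    have hn0 : (n : ZMod (n + 1)) ≠ 0 := by
      rw [Ne, ZMod.natCast_eq_zero_iff]
      exact fun h => absurd (Nat.le_of_dvd (by omega) h) (by omega)
    refine ⟨w, ?_, Equiv.ext fun q => (hρ w q).trans (hw q)⟩
    rw [foldl_bDelta, List.count_eq_zero_of_not_mem hw2]
    exact ⟨by rw [hw, hσ], by simpa using hn0.symm⟩
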